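/- arXiv:2101.02619 — 3 statements merged into one kernel-verified Lean document; each statement's English description precedes it below -/
import Mathlib

section
/- Let k be a field of characteristic 0, Γ a linearly ordered abelian group, γ ∈ Γ with γ > 0, and ρ ∈ k. In the Hahn series field L = l((X^Γ)) over l = k((T^ℚ)), the map σ defined on monomials by σ(a T^q X^g) = a T^q X^g · exp(q ρ X^γ) and extended by linearity and continuity is a ring automorphism of L. Moreover, for every x ∈ L with v(x) ≥ 0 one has v(x − σ(x)) ≥ v(x) + γ. -/
/-!
Let `D` be the derivation of `l = k((T^ℚ))` with `D (T^q) = q ρ T^q`, and `D_n = D^n / n!`.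
Then `σ = exp (X^γ D)`, acting on coefficients: `σ x = Σ_n X^{nγ} D_n x`, which multiplies a
monomial `a T^q X^g` by `exp (q ρ X^γ)`. The sum exists because for fixed `g` only finitely many
`g - nγ` lie in the well-ordered support of `x`. The Leibniz rule
`D_n (r s) = Σ_{i+j=n} D_i r · D_j s` makes `σ` multiplicative, `exp (a) exp (b) = exp (a + b)`
makes the twists for `ρ` and `-ρ` mutually inverse, and since `D_0 = id`,
`x - σ x = -Σ_{n ≥ 1} X^{nγ} D_n x` has valuation at least `v x + γ`.
-/

open Finset

theorem add_pow_div_factorial {K : Type*} [Field K] [CharZero K] (a b : K) (n : ℕ) :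
    (a + b) ^ n / n.factorial =
      ∑ p ∈ antidiagonal n, a ^ p.1 / p.1.factorial * (b ^ p.2 / p.2.factorial) := by
  have := congrArg (PowerSeries.coeff n) (PowerSeries.exp_mul_exp_eq_exp_add a b)
  simpa [PowerSeries.coeff_mul, PowerSeries.coeff_exp, div_eq_mul_inv, mul_comm] using this.symm

theorem finsum_eq_finsum_sum_antidiagonal {M : Type*} [AddCommMonoid M] (f : ℕ × ℕ → M)
    (hf : f.support.Finite) : ∑ᶠ p, f p = ∑ᶠ n, ∑ p ∈ antidiagonal n, f p := by
  classical
  set s := hf.toFinset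
  have hfib : ∀ n, ∑ p ∈ antidiagonal n, f p = ∑ p ∈ s with p.1 + p.2 = n, f p := fun n =>
    (sum_subset (fun p hp => by simp_all) (fun p _ hp => by simp_all [s])).symm
  rw [finsum_eq_sum_of_support_subset f (s := s) (by simp [s]),
    finsum_eq_sum_of_support_subset _ (s := s.image fun p => p.1 + p.2)]
  · simp only [hfib]
    exact (sum_fiberwise_of_maps_to (fun p hp => mem_image_of_mem _ hp) f).symm
  · intro n hn
    rw [Function.mem_support, hfib] at hn
    obtain ⟨p, hp, -⟩ := exists_ne_zero_of_sum_ne_zero hn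
    rw [mem_filter] at hp
    exact mem_image.2 ⟨p, hp⟩

namespace HahnSeries

variable {Γ R S : Type*}

section mapIdx

variable [PartialOrder Γ]

def mapIdx [AddCommMonoid R] [AddCommMonoid S] (F : Γ → R →+ S) : R⟦Γ⟧ →+ S⟦Γ⟧ where
  toFun x :=
    { coeff g := F g (x.coeff g)
      isPWO_support' := x.isPWO_support.mono fun g hg h => hg (by simp [h]) }
  map_zero' := by ext; simp
  map_add' x y := by ext; simp

variable [AddCommMonoid R] [AddCommMonoid S]

@[simp]
theorem coeff_mapIdx (F : Γ → R →+ S) (x : R⟦Γ⟧) (g : Γ) : (mapIdx F x).coeff g = F g (x.coeff g) :=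
  rfl

theorem support_mapIdx_subset (F : Γ → R →+ S) (x : R⟦Γ⟧) : (mapIdx F x).support ⊆ x.support :=
  fun g hg h => hg (by simp [h])

end mapIdx

section mul

variable [AddCommMonoid Γ] [PartialOrder Γ] [IsOrderedCancelAddMonoid Γ]
  [NonUnitalNonAssocSemiring R]

theorem coeff_mul_eq_sum_of_subset {x y : R⟦Γ⟧} {s t : Set Γ} (hs : s.IsPWO) (ht : t.IsPWO)
    (hxs : x.support ⊆ s) (hyt : y.support ⊆ t) (g : Γ) :
    (x * y).coeff g = ∑ ij ∈ antidiagonal hs ht g, x.coeff ij.1 * y.coeff ij.2 := by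
  rw [coeff_mul_left' hs hxs]
  refine sum_subset (fun ij hij => ?_) (fun ij hij hij' => ?_)
  · rw [Finset.mem_antidiagonal] at hij ⊢
    exact ⟨hij.1, hyt hij.2.1, hij.2.2⟩
  · rw [Finset.mem_antidiagonal] at hij hij'
    rw [of_not_not fun h => hij' ⟨hij.1, (y.mem_support _).2 h, hij.2.2⟩, mul_zero]

theorem mapIdx_mul (F : ℕ → Γ → R →+ R)
    (hF : ∀ n a b (r s : R), F n (a + b) (r * s) = ∑ p ∈ antidiagonal n, F p.1 a r * F p.2 b s)
    (n : ℕ) (x y : R⟦Γ⟧) :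
    mapIdx (F n) (x * y) = ∑ p ∈ antidiagonal n, mapIdx (F p.1) x * mapIdx (F p.2) y := by
  ext g
  have hterm : ∀ p : ℕ × ℕ, (mapIdx (F p.1) x * mapIdx (F p.2) y).coeff g =
      ∑ ij ∈ antidiagonal x.isPWO_support y.isPWO_support g,
        F p.1 ij.1 (x.coeff ij.1) * F p.2 ij.2 (y.coeff ij.2) := fun p =>
    coeff_mul_eq_sum_of_subset _ _ (support_mapIdx_subset _ x) (support_mapIdx_subset _ y) g
  rw [coeff_mapIdx, coeff_mul, map_sum, coeff_sum, sum_congr rfl fun p _ => hterm p, sum_comm]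
  refine sum_congr rfl fun ij hij => ?_
  rw [← (Finset.mem_antidiagonal.1 hij).2.2, hF]

end mul

section weightHasse

variable {Λ k : Type*} [AddCommMonoid Λ] [PartialOrder Λ] [Field k]

/-- `D^n / n!` for the derivation `D (T^q) = w q • T^q`; for `w q = q • ρ` this is `ρ T d/dT`. -/
def weightHasse (w : Λ →+ k) (n : ℕ) : k⟦Λ⟧ →+ k⟦Λ⟧ :=
  mapIdx fun q => AddMonoidHom.mulLeft (w q ^ n / n.factorial)

variable (w w' : Λ →+ k)

@[simp]
theorem coeff_weightHasse (n : ℕ) (r : k⟦Λ⟧) (q : Λ) :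
    (weightHasse w n r).coeff q = w q ^ n / n.factorial * r.coeff q :=
  rfl

@[simp]
theorem weightHasse_zero (r : k⟦Λ⟧) : weightHasse w 0 r = r := by
  ext; simp

theorem zero_weightHasse {n : ℕ} (hn : n ≠ 0) : weightHasse (0 : Λ →+ k) n = 0 := by
  ext; simp [zero_pow hn]

theorem weightHasse_single (n : ℕ) (q : Λ) (a : k) :
    weightHasse w n (single q a) = single q (w q ^ n / n.factorial * a) := by
  ext q'
  obtain rfl | h := eq_or_ne q' q <;> simp [coeff_single_of_ne, *]

variable [CharZero k]

theorem weightHasse_mul [IsOrderedCancelAddMonoid Λ] (n : ℕ) (r s : k⟦Λ⟧) :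
    weightHasse w n (r * s) = ∑ p ∈ antidiagonal n, weightHasse w p.1 r * weightHasse w p.2 s := by
  refine mapIdx_mul (fun n q => AddMonoidHom.mulLeft (w q ^ n / n.factorial))
    (fun n a b r s => ?_) n r s
  simp only [AddMonoidHom.coe_mulLeft, map_add, add_pow_div_factorial, sum_mul]
  exact sum_congr rfl fun _ _ => by ring

theorem sum_weightHasse_weightHasse (n : ℕ) (r : k⟦Λ⟧) :
    ∑ p ∈ antidiagonal n, weightHasse w p.1 (weightHasse w' p.2 r) = weightHasse (w + w') n r := by
  ext q
  simp only [coeff_sum, coeff_weightHasse, AddMonoidHom.add_apply, add_pow_div_factorial,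
    sum_mul, mul_assoc]

end weightHasse

section twist

variable [AddCommGroup Γ] [LinearOrder Γ] [IsOrderedAddMonoid Γ] {γ : Γ}

theorem isPWO_range_nsmul (hγ : 0 ≤ γ) : (Set.range fun n : ℕ => n • γ).IsPWO := by
  rw [← Set.image_univ]
  exact (Set.isPWO_of_wellQuasiOrderedLE _).image_of_monotone (nsmul_left_monotone hγ)

theorem finite_setOf_sub_nsmul_mem (hγ : 0 < γ) {s : Set Γ} (hs : s.IsPWO) (g : Γ) :
    {n : ℕ | g - n • γ ∈ s}.Finite := by
  refine ((Set.AddAntidiagonal.finite_of_isPWO (isPWO_range_nsmul hγ.le) hs g).preimage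
    (f := fun n : ℕ => (n • γ, g - n • γ)) ?_).subset fun n hn => ⟨⟨n, rfl⟩, hn, add_sub_cancel _ _⟩
  exact fun m _ n _ h => (nsmul_left_strictMono hγ).injective (congrArg Prod.fst h)

variable [Ring R] (D : ℕ → R →+ R) (hγ : 0 < γ)

noncomputable def twistFamily (x : R⟦Γ⟧) : SummableFamily Γ R ℕ where
  toFun n := single (n • γ) 1 * mapIdx (fun _ => D n) x
  isPWO_iUnion_support' := ((isPWO_range_nsmul hγ.le).add x.isPWO_support).mono <| by
    rintro g ⟨_, ⟨n, rfl⟩, hg⟩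
    rw [mem_support, coeff_single_mul, one_mul] at hg
    exact ⟨n • γ, ⟨n, rfl⟩, g - n • γ, support_mapIdx_subset _ x hg, add_sub_cancel _ _⟩
  finite_co_support' g := (finite_setOf_sub_nsmul_mem hγ x.isPWO_support g).subset fun n hn =>
    support_mapIdx_subset (fun _ => D n) x (by simpa [coeff_single_mul] using hn)

theorem twistFamily_apply (x : R⟦Γ⟧) (n : ℕ) :
    twistFamily D hγ x n = single (n • γ) 1 * mapIdx (fun _ => D n) x :=
  rfl

theorem coeff_twistFamily (x : R⟦Γ⟧) (n : ℕ) (g : Γ) :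
    (twistFamily D hγ x n).coeff g = D n (x.coeff (g - n • γ)) := by
  simp [twistFamily_apply, coeff_single_mul]

noncomputable def twist (x : R⟦Γ⟧) : R⟦Γ⟧ :=
  (twistFamily D hγ x).hsum

theorem coeff_twist (x : R⟦Γ⟧) (g : Γ) :
    (twist D hγ x).coeff g = ∑ᶠ n, D n (x.coeff (g - n • γ)) := by
  simp [twist, SummableFamily.coeff_hsum, coeff_twistFamily]

theorem twist_add (x y : R⟦Γ⟧) : twist D hγ (x + y) = twist D hγ x + twist D hγ y := by
  rw [twist, twist, twist, ← SummableFamily.hsum_add]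
  congr 1
  ext1 n
  simp only [SummableFamily.add_apply, twistFamily_apply, map_add, mul_add]

theorem single_one_mul_comm (a : Γ) (x : R⟦Γ⟧) : single a 1 * x = x * single a 1 := by
  ext g
  rw [coeff_single_mul, coeff_mul_single, one_mul, mul_one]

theorem twist_mul (hD : ∀ n (r s : R), D n (r * s) = ∑ p ∈ antidiagonal n, D p.1 r * D p.2 s)
    (x y : R⟦Γ⟧) : twist D hγ (x * y) = twist D hγ x * twist D hγ y := by
  ext g
  set P := SummableFamily.mul (twistFamily D hγ x) (twistFamily D hγ y)
  have hpair : ∀ p : ℕ × ℕ, (P p).coeff g =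
      (mapIdx (fun _ => D p.1) x * mapIdx (fun _ => D p.2) y).coeff (g - (p.1 + p.2) • γ) := by
    intro p
    rw [SummableFamily.mul_toFun, twistFamily_apply, twistFamily_apply, mul_assoc,
      ← mul_assoc _ (single _ _), ← single_one_mul_comm, mul_assoc, ← mul_assoc, single_mul_single,
      one_mul, ← add_nsmul, coeff_single_mul, one_mul]
  rw [twist, twist, twist, ← SummableFamily.hsum_mul, SummableFamily.coeff_hsum,
    SummableFamily.coeff_hsum, finsum_eq_finsum_sum_antidiagonal _ (P.finite_co_support g)]
  refine finsum_congr fun n => ?_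
  rw [sum_congr rfl fun p hp => by rw [hpair, HasAntidiagonal.mem_antidiagonal.1 hp],
    ← coeff_sum, ← mapIdx_mul (fun n _ => D n) (fun n _ _ => hD n), coeff_mapIdx, coeff_twistFamily]

theorem twist_twist {D' D'' : ℕ → R →+ R}
    (hD : ∀ n r, ∑ p ∈ antidiagonal n, D p.1 (D' p.2 r) = D'' n r) (x : R⟦Γ⟧) :
    twist D hγ (twist D' hγ x) = twist D'' hγ x := by
  ext g
  set F : ℕ × ℕ → R := fun p => D p.1 (D' p.2 (x.coeff (g - (p.1 + p.2) • γ)))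
  have hinner : ∀ n, D n ((twist D' hγ x).coeff (g - n • γ)) = ∑ᶠ m, F (n, m) := fun n => by
    have hfin := (twistFamily D' hγ x).finite_co_support (g - n • γ)
    simp only [coeff_twistFamily] at hfin
    rw [coeff_twist, map_finsum (D n) hfin]
    simp only [F, add_nsmul, sub_sub]
  have hF : F.support.Finite := by
    refine ((finite_setOf_sub_nsmul_mem hγ x.isPWO_support g).preimage' fun N _ =>
      (antidiagonal N).finite_toSet.subset fun p hp => HasAntidiagonal.mem_antidiagonal.2 hp).subset
      fun p hp => ?_
    exact (x.mem_support _).2 fun h => hp (by simp [F, h])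
  rw [coeff_twist, coeff_twist, finsum_congr hinner, ← finsum_curry F hF,
    finsum_eq_finsum_sum_antidiagonal F hF]
  refine finsum_congr fun n => ?_
  rw [← hD]
  exact sum_congr rfl fun p hp => by simp only [F, HasAntidiagonal.mem_antidiagonal.1 hp]

theorem twist_eq_self (h0 : ∀ r, D 0 r = r) (hpos : ∀ n ≠ 0, D n = 0) (x : R⟦Γ⟧) :
    twist D hγ x = x := by
  ext g
  rw [coeff_twist, finsum_eq_single _ 0 fun n hn => by rw [hpos n hn, AddMonoidHom.zero_apply],
    zero_nsmul, sub_zero, h0]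

theorem le_orderTop_sub_twist (h0 : ∀ r, D 0 r = r) (x : R⟦Γ⟧) :
    x.orderTop + γ ≤ (x - twist D hγ x).orderTop := by
  refine le_orderTop_iff_forall.2 fun j hj => ?_
  have hlt : ((j - γ : Γ) : WithTop Γ) < x.orderTop := by
    rwa [← sub_add_cancel j γ, WithTop.coe_add, WithTop.add_lt_add_iff_right WithTop.coe_ne_top]
      at hj
  rw [coeff_sub, coeff_twist, finsum_eq_single _ 0 fun n hn => ?_, zero_nsmul, sub_zero, h0,
    sub_self]
  have hle : γ ≤ n • γ := by
    simpa using nsmul_le_nsmul_left hγ.le (Nat.one_le_iff_ne_zero.2 hn)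
  rw [coeff_eq_zero_of_lt_orderTop ((WithTop.coe_le_coe.2 (sub_le_sub_left hle j)).trans_lt hlt),
    map_zero]

noncomputable def nsmulSeries (c : ℕ → R) : R⟦Γ⟧ :=
  embDomain (OrderEmbedding.ofStrictMono (· • γ) (nsmul_left_strictMono hγ))
    (toPowerSeries.symm (PowerSeries.mk c))

theorem coeff_nsmulSeries_nsmul (c : ℕ → R) (n : ℕ) : (nsmulSeries hγ c).coeff (n • γ) = c n := by
  refine embDomain_coeff.trans ?_
  rw [coeff_toPowerSeries_symm, PowerSeries.coeff_mk]

theorem coeff_nsmulSeries_of_not_exists (c : ℕ → R) {g : Γ} (hg : ¬∃ n : ℕ, g = n • γ) :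
    (nsmulSeries hγ c).coeff g = 0 :=
  embDomain_of_notMem_range fun ⟨n, hn⟩ => hg ⟨n, hn.symm⟩

theorem twist_single_of_forall_eq_mul {r : R} {c : ℕ → R} (h : ∀ n, D n r = r * c n) (g : Γ) :
    twist D hγ (single g r) = single g r * nsmulSeries hγ c := by
  ext g'
  rw [coeff_twist, coeff_single_mul]
  by_cases hg' : ∃ n : ℕ, g' - g = n • γ
  · obtain ⟨n, hn⟩ := hg'
    rw [hn, coeff_nsmulSeries_nsmul, ← h, finsum_eq_single _ n fun m hm => ?_,
      show g' - n • γ = g by rw [← hn, sub_sub_cancel], coeff_single_same]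
    rw [coeff_single_of_ne fun e => hm ((nsmul_left_strictMono hγ).injective ?_), map_zero]
    rw [← hn, ← e, sub_sub_cancel]
  · rw [coeff_nsmulSeries_of_not_exists hγ c hg', mul_zero]
    refine finsum_eq_zero_of_forall_eq_zero fun n => ?_
    rw [coeff_single_of_ne fun e => hg' ⟨n, by rw [← e, sub_sub_cancel]⟩, map_zero]

end twist

noncomputable def weightTwist {Λ k : Type*} [AddCommMonoid Λ] [PartialOrder Λ]
    [IsOrderedCancelAddMonoid Λ] [Field k] [CharZero k] [AddCommGroup Γ] [LinearOrder Γ]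
    [IsOrderedAddMonoid Γ] (w : Λ →+ k) {γ : Γ} (hγ : 0 < γ) : k⟦Λ⟧⟦Γ⟧ ≃+* k⟦Λ⟧⟦Γ⟧ where
  toFun := twist (weightHasse w) hγ
  invFun := twist (weightHasse (-w)) hγ
  left_inv x := by
    rw [twist_twist _ hγ (sum_weightHasse_weightHasse (-w) w), neg_add_cancel,
      twist_eq_self _ hγ (weightHasse_zero 0) fun _ => zero_weightHasse]
  right_inv x := by
    rw [twist_twist _ hγ (sum_weightHasse_weightHasse w (-w)), add_neg_cancel,
      twist_eq_self _ hγ (weightHasse_zero 0) fun _ => zero_weightHasse]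
  map_mul' := twist_mul _ hγ (weightHasse_mul w)
  map_add' := twist_add _ hγ

end HahnSeries

/-- Let `k` be a field of characteristic `0`, `Γ` a linearly ordered abelian group,
`γ > 0` in `Γ`, and `ρ ∈ k`. In the Hahn series field `L = l((X^Γ))` over
`l = k((T^ℚ))`, there is a ring automorphism `σ` acting on monomials by
`σ(a T^q X^g) = a T^q X^g · exp(q ρ X^γ)` (where `exp(q ρ X^γ)` is the series `E q`
with coefficient `(qρ)^n/n!` at `nγ` and `0` elsewhere), and it satisfies
`v(x − σ(x)) ≥ v(x) + γ` for every `x` with `v(x) ≥ 0`, where `v` is the `X`-adic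
valuation (`HahnSeries.orderTop`). -/
theorem stmt3 {k Γ : Type*} [Field k] [CharZero k] [AddCommGroup Γ] [LinearOrder Γ] [IsOrderedAddMonoid Γ]
    (γ : Γ) (hγ : 0 < γ) (ρ : k) :
    ∃ (σ : HahnSeries Γ (HahnSeries ℚ k) ≃+* HahnSeries Γ (HahnSeries ℚ k))
      (E : ℚ → HahnSeries Γ (HahnSeries ℚ k)),
      (∀ (q : ℚ) (n : ℕ),
        (E q).coeff (n • γ) = HahnSeries.single (0 : ℚ) ((q • ρ) ^ n / (n.factorial : k))) ∧
      (∀ (q : ℚ) (g : Γ), (¬ ∃ n : ℕ, g = n • γ) → (E q).coeff g = 0) ∧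
      (∀ (a : k) (q : ℚ) (g : Γ),
        σ (HahnSeries.single g (HahnSeries.single q a)) =
          HahnSeries.single g (HahnSeries.single q a) * E q) ∧
      (∀ x : HahnSeries Γ (HahnSeries ℚ k),
        0 ≤ x.orderTop → x.orderTop + (γ : WithTop Γ) ≤ (x - σ x).orderTop) := by
  let w : ℚ →+ k := (smulAddHom ℚ k).flip ρ
  let E q := HahnSeries.nsmulSeries hγ fun n => HahnSeries.single (0 : ℚ) (w q ^ n / n.factorial)
  have hmonomial (a : k) (q : ℚ) (n : ℕ) :
      HahnSeries.weightHasse w n (HahnSeries.single q a) =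
        HahnSeries.single q a * HahnSeries.single 0 (w q ^ n / n.factorial) := by
    rw [HahnSeries.weightHasse_single, HahnSeries.single_mul_single, add_zero, mul_comm]
  exact ⟨HahnSeries.weightTwist w hγ, E,
    fun q => HahnSeries.coeff_nsmulSeries_nsmul hγ _,
    fun q _ => HahnSeries.coeff_nsmulSeries_of_not_exists hγ _,
    fun a q => HahnSeries.twist_single_of_forall_eq_mul _ hγ (hmonomial a q),
    fun x _ => HahnSeries.le_orderTop_sub_twist _ hγ (HahnSeries.weightHasse_zero w) x⟩
end

section
/- Let H be a finite-dimensional vector space over a valued field K with valuation ring O. For every semi-lattice u in H there exist an integer l, r ≥ 0 with l + r = dim H and an O-module isomorphism u ≅ O^l × K^r; consequently there exists a K-basis b_1, …, b_n of H such that u = ⊕_{i=1}^n (u ∩ K b_i). -/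
section

variable (K : Type*) {O H : Type*} [Field K] [CommRing O] [IsDomain O] [ValuationRing O]
  [Algebra O K] [IsFractionRing O K]
  [AddCommGroup H] [Module K H] [Module O H] [IsScalarTower O K H]

/-- An `O`-submodule `u` of the `K`-vector space `H` is a *semi-lattice* if there is a
`K`-subspace `U ≤ H` contained in `u` such that `u/U` is a lattice in `H/U`, i.e. `u`
is generated over `U` by finitely many elements as an `O`-module, and `u` spans `H`
over `K`. -/
def IsSemiLattice (u : Submodule O H) : Prop :=
  ∃ U : Submodule K H, U.restrictScalars O ≤ u ∧
    (∃ s : Finset H, u = U.restrictScalars O ⊔ Submodule.span O (s : Set H)) ∧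
    Submodule.span K (u : Set H) = ⊤

end

/-!
Choose a complement `W` of `U` and project the finitely many generators of `u` into `W` along `U`:
this writes `u = U ⊕ M` with `M` a finitely generated `O`-submodule of `W`. Being torsion-free,
`M` is flat over the Bézout ring `O`, hence free because `O` is local. An `O`-basis of `M` is
`K`-linearly independent, as `K` is the fraction field of `O`, so together with a `K`-basis of `U`
it is a `K`-basis of `H` which diagonalizes `u`.
-/

open Module Submodule

theorem ValuationRing.free_of_isTorsionFree {R M : Type*} [CommRing R] [IsDomain R]
    [ValuationRing R] [AddCommGroup M] [Module R M] [Module.Finite R M] [IsTorsionFree R M] :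
    Module.Free R M :=
  have : Module.Flat R M := Module.Flat.flat_iff_torsion_eq_bot_of_isBezout.mpr
    (isTorsionFree_iff_torsion_eq_bot.mp ‹_›)
  Module.free_of_flat_of_isLocalRing

theorem eq_iSup_inf_of_eq_iSup {α ι : Type*} [CompleteLattice α] {a : α} {N p : ι → α}
    (ha : a = ⨆ i, N i) (hN : ∀ i, N i ≤ p i) : a = ⨆ i, a ⊓ p i :=
  le_antisymm (ha.trans_le <| iSup_mono fun i => le_inf (ha ▸ le_iSup N i) (hN i))
    (iSup_le fun _ => inf_le_left)

section Module

variable {R E : Type*} [Ring R] [AddCommGroup E] [Module R E]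

theorem Submodule.sup_span_image_eq (p : Submodule R E) {f : E → E} (hf : ∀ x, f x - x ∈ p)
    (s : Set E) : p ⊔ span R (f '' s) = p ⊔ span R s := by
  have hmk : p.mkQ ∘ f = p.mkQ := funext fun x => (Submodule.Quotient.eq p).mpr (hf x)
  rw [← comap_map_mkQ, ← comap_map_mkQ p (span R s), map_span, map_span, ← Set.image_comp,
    hmk]

noncomputable def Submodule.supEquivProdOfDisjoint {p q : Submodule R E} (h : Disjoint p q) :
    ↥(p ⊔ q) ≃ₗ[R] p × q :=
  ((LinearEquiv.ofInjective (p.subtype.coprod q.subtype) <| by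
      rw [← LinearMap.ker_eq_bot, LinearMap.ker_coprod_of_disjoint_range _ _ (by simpa using h)]
      simp).trans (LinearEquiv.ofEq _ _ (by simp [LinearMap.range_coprod]))).symm

theorem Module.Basis.span_range_subtype_comp {ι : Type*} {p : Submodule R E} (b : Basis ι R p) :
    span R (Set.range (p.subtype ∘ b)) = p := by
  rw [Set.range_comp, ← map_span, b.span_eq, Submodule.map_top, range_subtype]

end Module

section SemiLattice

variable {K O H : Type*} [Field K] [CommRing O] [Algebra O K] [AddCommGroup H] [Module K H]
  [Module O H] [IsScalarTower O K H]

theorem IsSemiLattice.exists_isCompl_sup_eq {u : Submodule O H} (hu : IsSemiLattice K u) :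
    ∃ (U : Submodule K H) (M : Submodule O H), M.FG ∧ IsCompl U (span K (M : Set H)) ∧
      U.restrictScalars O ⊔ M = u := by
  obtain ⟨U, -, ⟨s, rfl⟩, hspan⟩ := hu
  obtain ⟨W, hUW⟩ := U.exists_isCompl
  set P := W.projection U hUW.symm
  have hsup : U.restrictScalars O ⊔ span O (P '' s) = U.restrictScalars O ⊔ span O s := by
    refine sup_span_image_eq _ (fun x => ?_) _
    rw [← neg_sub, restrictScalars_mem]
    exact neg_mem (sub_projection_mem _ x)
  refine ⟨U, _, fg_span (s.finite_toSet.image P), ⟨?_, ?_⟩, hsup⟩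
  · refine hUW.disjoint.mono_right ?_
    rw [span_span_of_tower, span_le]
    rintro _ ⟨x, -, rfl⟩
    exact projection_apply_mem hUW.symm x
  · rw [codisjoint_iff, eq_top_iff, ← hspan, span_le, ← hsup]
    intro x hx
    obtain ⟨y, hy, z, hz, rfl⟩ := mem_sup.mp hx
    exact add_mem (mem_sup_left hy) (mem_sup_right (subset_span hz))

variable {U : Submodule K H} {M : Submodule O H} (hUM : IsCompl U (span K (M : Set H)))
  {ι κ : Type*} (e : Basis ι O M) (b : Basis κ K U)

noncomputable def IsCompl.semiLatticeEquiv [Finite ι] [Finite κ] :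
    ↥(U.restrictScalars O ⊔ M) ≃ₗ[O] (ι → O) × (κ → K) :=
  (supEquivProdOfDisjoint <| (disjoint_def (p := U.restrictScalars O) (p' := M)).mpr
      fun x hxU hxM => disjoint_def.mp hUM.disjoint x hxU (subset_span hxM)).trans <|
    (LinearEquiv.prodComm O _ _).trans <|
      e.equivFun.prodCongr (((U.restrictScalarsEquiv O K H).trans b.equivFun).restrictScalars O)

variable [IsFractionRing O K]

noncomputable def IsCompl.semiLatticeBasis : Basis (ι ⊕ κ) K H :=
  .mk (v := Sum.elim (M.subtype ∘ e) (U.subtype ∘ b))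
    (((LinearIndependent.iff_fractionRing O K).mp
      (e.linearIndependent.map' _ M.ker_subtype)).sum_type
        (b.linearIndependent.map' _ U.ker_subtype) <| by
          rw [← span_span_of_tower O, e.span_range_subtype_comp, b.span_range_subtype_comp]
          exact hUM.symm.disjoint) <| by
    rw [Set.Sum.elim_range, span_union, ← span_span_of_tower O, e.span_range_subtype_comp,
      b.span_range_subtype_comp, sup_comm, hUM.sup_eq_top]

@[simp] theorem IsCompl.semiLatticeBasis_inl (i : ι) :
    hUM.semiLatticeBasis e b (.inl i) = e i := by
  simp [IsCompl.semiLatticeBasis]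

@[simp] theorem IsCompl.semiLatticeBasis_inr (j : κ) :
    hUM.semiLatticeBasis e b (.inr j) = b j := by
  simp [IsCompl.semiLatticeBasis]

theorem IsCompl.sup_eq_iSup_inf_span_semiLatticeBasis {ν : Type*} (σ : ι ⊕ κ ≃ ν) :
    U.restrictScalars O ⊔ M = ⨆ k, (U.restrictScalars O ⊔ M) ⊓
      (K ∙ (hUM.semiLatticeBasis e b).reindex σ k).restrictScalars O := by
  let N : ι ⊕ κ → Submodule O H :=
    Sum.elim (fun i => O ∙ (e i : H)) (fun j => (K ∙ (b j : H)).restrictScalars O)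
  refine eq_iSup_inf_of_eq_iSup (N := fun k => N (σ.symm k)) ?_ fun k => ?_
  · rw [σ.symm.iSup_comp, iSup_sum, sup_comm]
    simp only [N, Sum.elim_inl, Sum.elim_inr, ← restrictScalars_iSup]
    rw [← span_range_eq_iSup, ← span_range_eq_iSup]
    exact congr_arg₂ (· ⊔ ·) e.span_range_subtype_comp.symm
      (congr_arg _ b.span_range_subtype_comp.symm)
  · rw [Basis.reindex_apply]
    cases σ.symm k with
    | inl i => simp [N, span_le_restrictScalars]
    | inr j => simp [N]

end SemiLattice

section

variable (K : Type*) {O H : Type*} [Field K] [CommRing O] [IsDomain O] [ValuationRing O]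
  [Algebra O K] [IsFractionRing O K]
  [AddCommGroup H] [Module K H] [Module O H] [IsScalarTower O K H]

/-- Every semi-lattice `u` in a finite-dimensional `K`-vector space `H` is
`O`-module isomorphic to `O^l × K^r` with `l + r = dim H`; consequently there is a
`K`-basis `b` of `H` diagonalizing `u`, i.e. `u = ⊕ᵢ (u ∩ K bᵢ)`. -/
theorem stmt8 [FiniteDimensional K H] (u : Submodule O H) (hu : IsSemiLattice K u) :
    ∃ l r : ℕ, l + r = Module.finrank K H ∧
      Nonempty (u ≃ₗ[O] ((Fin l → O) × (Fin r → K))) ∧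
      ∃ b : Module.Basis (Fin (Module.finrank K H)) K H,
        u = ⨆ i, u ⊓ (Submodule.span K {b i}).restrictScalars O := by
  obtain ⟨U, M, hMfg, hUM, rfl⟩ := hu.exists_isCompl_sup_eq
  have : Module.Finite O M := Module.Finite.iff_fg.mpr hMfg
  have : IsTorsionFree O H := .trans_faithfulSMul O K H
  have : Module.Free O M := ValuationRing.free_of_isTorsionFree
  let e := finBasis O M
  let b := finBasis K U
  have hdim : finrank O M + finrank K U = finrank K H := by
    simpa using (finrank_eq_card_basis (hUM.semiLatticeBasis e b)).symm
  exact ⟨_, _, hdim, ⟨hUM.semiLatticeEquiv e b⟩, _,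
    hUM.sup_eq_iSup_inf_span_semiLatticeBasis e b (finSumFinEquiv.trans (finCongr hdim))⟩

end
end

section
/- Let O be a valuation ring with fraction field K and value group Γ, let D ≤ O be a submodule of the form γO or γm for some γ ≥ 0, and d ∈ ℕ. Then for any O-submodule M ≤ O^d such that each of the d coordinate quotients O/(M ∩ e_i O) embeds in a product of copies of O/D (where e_i O is the i-th coordinate copy of O), one has D^d ≤ M. -/
set_option synthInstance.maxHeartbeats 1000000
set_option maxHeartbeats 4000000

/-- Let `O` be the valuation ring of a valued field `K` and `D ≤ O` a submodule of the
form `γO = {x : v(x) ≥ γ}` or `γ𝔪 = {x : v(x) > γ}` for some `γ ≥ 0` (in the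
multiplicative convention: `v x ≤ γ` resp. `v x < γ` with `γ ≤ 1`). Then for every
`O`-submodule `M ≤ O^d` such that each coordinate quotient `O/(M ∩ eᵢO)` embeds as an
`O`-module into a product of copies of `O/D`, one has `D^d ≤ M`. -/
theorem stmt18 {K Γ₀ : Type*} [Field K] [LinearOrderedCommGroupWithZero Γ₀]
    (v : Valuation K Γ₀) (d : ℕ)
    (D : Ideal v.integer) (γ : Γ₀) (hγ : γ ≤ 1)
    (hD : (∀ x : v.integer, x ∈ D ↔ v (x : K) ≤ γ) ∨
          (∀ x : v.integer, x ∈ D ↔ v (x : K) < γ))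
    (M : Submodule v.integer (Fin d → v.integer))
    (hint : ∀ i : Fin d, ∃ (κ : Type) (φ :
        (v.integer ⧸ M.comap (LinearMap.single v.integer (fun _ : Fin d => v.integer) i))
          →ₗ[v.integer] (κ → v.integer ⧸ D)),
      Function.Injective φ) :
    ∀ x : Fin d → v.integer, (∀ i, x i ∈ D) → x ∈ M := by
  intro x hx
  have hsingle : ∀ i : Fin d,
      (LinearMap.single v.integer (fun _ : Fin d => v.integer) i) (x i) ∈ M := by
    intro i
    obtain ⟨κ, φ, hφ⟩ := hint i
    suffices h0 : φ (Submodule.Quotient.mk (x i)) = 0 by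
      have h1 : (Submodule.Quotient.mk (x i) :
          v.integer ⧸ M.comap (LinearMap.single v.integer (fun _ : Fin d => v.integer) i))
          = 0 := hφ (by rw [h0, map_zero])
      exact (Submodule.Quotient.mk_eq_zero
        (M.comap (LinearMap.single v.integer (fun _ : Fin d => v.integer) i))).mp h1
    have hsmul : (Submodule.Quotient.mk (x i) :
        v.integer ⧸ M.comap (LinearMap.single v.integer (fun _ : Fin d => v.integer) i))
        = (x i) • Submodule.Quotient.mk 1 := by
      rw [← Submodule.Quotient.mk_smul]
      simp [smul_eq_mul]
    rw [hsmul, map_smul]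
    funext j
    simp only [Pi.smul_apply, Pi.zero_apply]
    obtain ⟨y, hy⟩ := Submodule.Quotient.mk_surjective D (φ (Submodule.Quotient.mk 1) j)
    rw [← hy, ← Submodule.Quotient.mk_smul, Submodule.Quotient.mk_eq_zero]
    have hxy : x i * y ∈ D := D.mul_mem_right y (hx i)
    simpa [smul_eq_mul] using hxy
  have hx2 : x = ∑ i, (LinearMap.single v.integer (fun _ : Fin d => v.integer) i) (x i) := by
    funext j
    simp [LinearMap.single_apply, Pi.single_apply, Finset.sum_apply]
  rw [hx2]
  exact Submodule.sum_mem M fun i _ => hsingle i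
end
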